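/- Let G be a split graph with clique K = {k_1,…,k_p} and independent set I = {l_1,…,l_q}. Let G' be the graph whose vertex set consists of the vertices of G, a disjoint copy {m_1,…,m_p} ∪ {n_1,…,n_q} of them, and four new vertices k, l, m, n, and whose edges are: all edges of G joining K to I (the clique edges inside K are not included); an edge m_i n_j whenever k_i l_j is an edge of G; all edges between {k, k_1,…,k_p} and {m, m_1,…,m_p}; and the pendant edges l–k and n–m. Then for every positive integer k₀: G has a secure dominating set of cardinality at most k₀ if and only if G' has a secure dominating set of cardinality at most 2k₀ + 2. -/

import Mathlib

/-- `D` is a dominating set of `G`: every vertex outside `D` has a neighbour in `D`. -/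
def Dominates {V : Type*} (G : SimpleGraph V) (D : Set V) : Prop :=
  ∀ u, u ∉ D → ∃ v ∈ D, G.Adj u v

/-- `S` is a secure dominating set of `G`. -/
def SecureDominates {V : Type*} (G : SimpleGraph V) (S : Set V) : Prop :=
  Dominates G S ∧
    ∀ u, u ∉ S → ∃ v ∈ S, G.Adj u v ∧ Dominates G ((S \ {v}) ∪ {u})

/-- The graph `G'` obtained from a split graph `G` with clique `K` and independent set `I`.
Vertices: the original vertices (`Sum.inl u`), a disjoint copy of them
(`Sum.inr (Sum.inl u)`), and four new vertices `k = Sum.inr (Sum.inr 0)`,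
`l = Sum.inr (Sum.inr 1)`, `m = Sum.inr (Sum.inr 2)`, `n = Sum.inr (Sum.inr 3)`.
Edges: all edges of `G` joining `K` to `I` (the clique edges inside `K` are not included);
an edge between the copies of `kᵢ ∈ K` and `lⱼ ∈ I` whenever `kᵢ lⱼ` is an edge of `G`;
all edges between `{k} ∪ K` and the copy `{m} ∪ K`-copy; and the pendant edges
`l - k` and `n - m`. -/
def splitBigExt {V : Type*} (G : SimpleGraph V) (K I : Set V) :
    SimpleGraph (V ⊕ V ⊕ Fin 4) :=
  SimpleGraph.fromRel (fun a b =>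
    (∃ u v, a = Sum.inl u ∧ b = Sum.inl v ∧ G.Adj u v ∧ u ∈ K ∧ v ∈ I) ∨
    (∃ u v, a = Sum.inr (Sum.inl u) ∧ b = Sum.inr (Sum.inl v) ∧ G.Adj u v ∧ u ∈ K ∧ v ∈ I) ∨
    (∃ u v, a = Sum.inl u ∧ u ∈ K ∧ b = Sum.inr (Sum.inl v) ∧ v ∈ K) ∨
    (∃ u, a = Sum.inl u ∧ u ∈ K ∧ b = Sum.inr (Sum.inr 2)) ∨
    (∃ v, a = Sum.inr (Sum.inr 0) ∧ b = Sum.inr (Sum.inl v) ∧ v ∈ K) ∨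
    (a = Sum.inr (Sum.inr 0) ∧ b = Sum.inr (Sum.inr 2)) ∨
    (a = Sum.inr (Sum.inr 1) ∧ b = Sum.inr (Sum.inr 0)) ∨
    (a = Sum.inr (Sum.inr 3) ∧ b = Sum.inr (Sum.inr 2)))

/-!
In a split graph, secure domination is governed by the independent side: every `x ∈ I \ S` needs
a defender `s ∈ S ∩ K` such that `(S ∩ K) \ {s}` still dominates the rest of `I \ S`
(`SecureOnIndep`). In `G'` the two copies of `G` lose their clique edges, which are replaced by the
complete bipartite graph between `{k} ∪ K` and `{m} ∪ K'` (`K'` the copy of `K`), and the pendant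
vertices `l`, `n` force two of `k, l, m, n` into every dominating set.

If `D` satisfies `SecureOnIndep` and `SecureOnClique`, then `D ∪ D' ∪ {k, m}` is secure dominating
in `G'`. A secure dominating set `S` of `G` either satisfies both, or every vertex of `S ∩ K` has a
private neighbour in `I \ S`; then `|I| ≤ |S|` and `D = I` works.

Conversely, by the symmetry of `G'` exchanging the two copies, the trace `S_A` of `S'` on the
first copy may be taken to be the smaller trace. It satisfies `SecureOnIndep`, so it is secure
dominating in `G` unless `SecureOnClique` fails. Then `|I| ≤ |S_A|`, so `I ∪ {b}` is secure
dominating for any `b ∈ K`; and the defender in `G'` of a vertex `b` witnessing the failure shows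
that either the trace on the second copy is secure dominating in `G`, or both `m` and `n` lie in
`S'`, which pays for the extra vertex.
-/

open Set

section

variable {V W : Type*}

section Domination

variable {G : SimpleGraph V} {H : SimpleGraph W}

def DominatesOn (G : SimpleGraph V) (D A : Set V) : Prop :=
  ∀ y ∈ A, ∃ t ∈ D, G.Adj y t

theorem DominatesOn.mono {D D' A A' : Set V} (h : DominatesOn G D A) (hD : D ⊆ D')
    (hA : A' ⊆ A) : DominatesOn G D' A' := fun y hy =>
  let ⟨t, ht, hadj⟩ := h y (hA hy)
  ⟨t, hD ht, hadj⟩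

def IsDefended (G : SimpleGraph V) (S : Set V) (u : V) : Prop :=
  ∃ v ∈ S, G.Adj u v ∧ Dominates G (S \ {v} ∪ {u})

theorem secureDominates_of_forall_isDefended {S : Set V} (h : ∀ u ∉ S, IsDefended G S u) :
    SecureDominates G S :=
  ⟨fun u hu => let ⟨v, hv, hadj, _⟩ := h u hu; ⟨v, hv, hadj⟩, h⟩

theorem Dominates.image {D : Set V} (e : G ≃g H) (h : Dominates G D) :
    Dominates H (e '' D) := by
  intro u hu
  obtain ⟨a, rfl⟩ := e.surjective u
  obtain ⟨v, hv, hadj⟩ := h a fun ha => hu (mem_image_of_mem e ha)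
  exact ⟨e v, mem_image_of_mem e hv, e.map_adj_iff.2 hadj⟩

theorem IsDefended.image {S : Set V} {u : V} (e : G ≃g H) (h : IsDefended G S u) :
    IsDefended H (e '' S) (e u) := by
  obtain ⟨v, hv, hadj, hdom⟩ := h
  refine ⟨e v, mem_image_of_mem e hv, e.map_adj_iff.2 hadj, ?_⟩
  simpa only [image_union, image_sdiff e.injective, image_singleton] using hdom.image e

theorem SecureDominates.image {S : Set V} (e : G ≃g H) (h : SecureDominates G S) :
    SecureDominates H (e '' S) := by
  refine ⟨h.1.image e, fun u hu => ?_⟩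
  obtain ⟨a, rfl⟩ := e.surjective u
  exact IsDefended.image e (h.2 a fun ha => hu (mem_image_of_mem e ha))

end Domination

theorem Set.ncard_preimage_inl_add_ncard_preimage_inr [Finite V] [Finite W] (s : Set (V ⊕ W)) :
    (Sum.inl ⁻¹' s).ncard + (Sum.inr ⁻¹' s).ncard = s.ncard := by
  conv_rhs => rw [← image_preimage_inl_union_image_preimage_inr s]
  rw [ncard_union_eq disjoint_image_inl_image_inr, ncard_image_of_injective _ Sum.inl_injective,
    ncard_image_of_injective _ Sum.inr_injective]

section SplitGraph

variable {G : SimpleGraph V} {K I S : Set V}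

def SecureOnIndep (G : SimpleGraph V) (K I S : Set V) : Prop :=
  ∀ x ∈ I \ S, ∃ s ∈ S ∩ K, G.Adj x s ∧ DominatesOn G ((S ∩ K) \ {s}) ((I \ S) \ {x})

def HasRedundantCliqueVertex (G : SimpleGraph V) (K I S : Set V) : Prop :=
  ∃ v ∈ S ∩ K, DominatesOn G ((S ∩ K) \ {v}) (I \ S)

/-- Stronger than what secure domination asks on the clique side, but it survives the passage to
`G'`: there a vertex of `K` has no clique neighbour in its own copy, and a defender taken from the
other copy must be redundant there. -/
def SecureOnClique (G : SimpleGraph V) (K I S : Set V) : Prop :=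
  DominatesOn G (S ∩ I) (K \ S) ∨ HasRedundantCliqueVertex G K I S

theorem SecureOnIndep.dominatesOn (h : SecureOnIndep G K I S) :
    DominatesOn G (S ∩ K) (I \ S) := fun x hx =>
  let ⟨s, hs, hadj, _⟩ := h x hx
  ⟨s, hs, hadj⟩

theorem HasRedundantCliqueVertex.exists_ne (h : HasRedundantCliqueVertex G K I S) {x : V}
    (hx : x ∈ I \ S) (s : V) : ∃ t ∈ S ∩ K, t ≠ s := by
  obtain ⟨v, hv, hdom⟩ := h
  by_cases hvs : v = s
  · obtain ⟨t, ⟨ht, hts⟩, -⟩ := hdom x hx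
    exact ⟨t, ht, hvs ▸ hts⟩
  · exact ⟨v, hv, hvs⟩

theorem mem_of_adj_of_mem_indep (hpart : K ∪ I = univ) (hI : ∀ a ∈ I, ∀ b ∈ I, ¬ G.Adj a b)
    {x v : V} (hx : x ∈ I) (h : G.Adj x v) : v ∈ K :=
  (eq_univ_iff_forall.1 hpart v).resolve_right fun hv => hI x hx v hv h

theorem SecureDominates.secureOnIndep (hpart : K ∪ I = univ)
    (hI : ∀ a ∈ I, ∀ b ∈ I, ¬ G.Adj a b) (hS : SecureDominates G S) :
    SecureOnIndep G K I S := by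
  rintro x ⟨hxI, hxS⟩
  obtain ⟨s, hs, hadj, hdom⟩ := hS.2 x hxS
  refine ⟨s, ⟨hs, mem_of_adj_of_mem_indep hpart hI hxI hadj⟩, hadj, ?_⟩
  rintro y ⟨⟨hyI, hyS⟩, hyx⟩
  obtain ⟨t, ⟨htS, hts⟩ | rfl, hyt⟩ := hdom y (by simpa [hyS] using hyx)
  · exact ⟨t, ⟨⟨htS, mem_of_adj_of_mem_indep hpart hI hyI hyt⟩, hts⟩, hyt⟩
  · exact absurd hyt (hI y hyI t hxI)

theorem isDefended_of_mem_indep (hpart : K ∪ I = univ) (hdisj : Disjoint K I)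
    (hK : G.IsClique K) (hind : SecureOnIndep G K I S) (hcl : SecureOnClique G K I S) {x : V}
    (hx : x ∈ I \ S) : IsDefended G S x := by
  obtain ⟨s, ⟨hsS, hsK⟩, hadj, hdom⟩ := hind x hx
  refine ⟨s, hsS, hadj, fun z hz => ?_⟩
  simp only [mem_union, mem_sdiff, mem_singleton_iff, not_or, not_and, not_not] at hz
  rcases eq_univ_iff_forall.1 hpart z with hzK | hzI
  · by_cases hzs : z = s
    · exact ⟨x, Or.inr rfl, hzs ▸ hadj.symm⟩
    have hzS : z ∉ S := fun h => hzs (hz.1 h)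
    rcases hcl with hcl | hred
    · obtain ⟨w, ⟨hwS, hwI⟩, hzw⟩ := hcl z ⟨hzK, hzS⟩
      exact ⟨w, Or.inl ⟨hwS, fun h => disjoint_left.1 hdisj hsK (h ▸ hwI)⟩, hzw⟩
    · obtain ⟨t, ⟨htS, htK⟩, hts⟩ := hred.exists_ne hx s
      exact ⟨t, Or.inl ⟨htS, hts⟩, hK hzK htK (ne_of_mem_of_not_mem htS hzS).symm⟩
  · have hzS : z ∉ S := fun h => disjoint_left.1 hdisj hsK (hz.1 h ▸ hzI)
    obtain ⟨t, ⟨⟨htS, -⟩, hts⟩, hzt⟩ := hdom z ⟨⟨hzI, hzS⟩, hz.2⟩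
    exact ⟨t, Or.inl ⟨htS, hts⟩, hzt⟩

theorem isDefended_of_mem_clique (hpart : K ∪ I = univ) (hdisj : Disjoint K I)
    (hK : G.IsClique K) (hind : SecureOnIndep G K I S) (hcl : SecureOnClique G K I S) {b : V}
    (hb : b ∈ K \ S) : IsDefended G S b := by
  have adj_b {z : V} (hzK : z ∈ K) (hzb : z ≠ b) : G.Adj z b := hK hzK hb.1 hzb
  rcases hcl with hcl | ⟨v, ⟨hvS, hvK⟩, hdom⟩
  · obtain ⟨w, ⟨hwS, hwI⟩, hbw⟩ := hcl b hb
    refine ⟨w, hwS, hbw, fun z hz => ?_⟩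
    simp only [mem_union, mem_sdiff, mem_singleton_iff, not_or, not_and, not_not] at hz
    rcases eq_univ_iff_forall.1 hpart z with hzK | hzI
    · exact ⟨b, Or.inr rfl, adj_b hzK hz.2⟩
    by_cases hzw : z = w
    · exact ⟨b, Or.inr rfl, hzw ▸ hbw.symm⟩
    obtain ⟨t, ⟨htS, htK⟩, hzt⟩ := hind.dominatesOn z ⟨hzI, fun h => hzw (hz.1 h)⟩
    exact ⟨t, Or.inl ⟨htS, fun h => disjoint_left.1 hdisj htK (h ▸ hwI)⟩, hzt⟩
  · refine ⟨v, hvS, (adj_b hvK (ne_of_mem_of_not_mem hvS hb.2)).symm, fun z hz => ?_⟩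
    simp only [mem_union, mem_sdiff, mem_singleton_iff, not_or, not_and, not_not] at hz
    rcases eq_univ_iff_forall.1 hpart z with hzK | hzI
    · exact ⟨b, Or.inr rfl, adj_b hzK hz.2⟩
    have hzS : z ∉ S := fun h => disjoint_left.1 hdisj hvK (hz.1 h ▸ hzI)
    obtain ⟨t, ⟨⟨htS, -⟩, htv⟩, hzt⟩ := hdom z ⟨hzI, hzS⟩
    exact ⟨t, Or.inl ⟨htS, htv⟩, hzt⟩

theorem secureDominates_of_secureOnIndep (hpart : K ∪ I = univ) (hdisj : Disjoint K I)
    (hK : G.IsClique K) (hind : SecureOnIndep G K I S) (hcl : SecureOnClique G K I S) :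
    SecureDominates G S := by
  refine secureDominates_of_forall_isDefended fun z hz => ?_
  rcases eq_univ_iff_forall.1 hpart z with hzK | hzI
  · exact isDefended_of_mem_clique hpart hdisj hK hind hcl ⟨hzK, hz⟩
  · exact isDefended_of_mem_indep hpart hdisj hK hind hcl ⟨hzI, hz⟩

theorem secureDominates_insert_indep (hpart : K ∪ I = univ) (hdisj : Disjoint K I)
    (hK : G.IsClique K) {b : V} (hb : b ∈ K) : SecureDominates G (insert b I) :=
  secureDominates_of_secureOnIndep hpart hdisj hK
    (fun _ hx => absurd (mem_insert_of_mem b hx.1) hx.2)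
    (Or.inr ⟨b, ⟨mem_insert b I, hb⟩, fun _ hy => absurd (mem_insert_of_mem b hy.1) hy.2⟩)

theorem exists_forall_not_adj_of_not_hasRedundantCliqueVertex
    (hred : ¬ HasRedundantCliqueVertex G K I S) {v : V} (hv : v ∈ S ∩ K) :
    ∃ y ∈ I \ S, ∀ t ∈ (S ∩ K) \ {v}, ¬ G.Adj y t := by
  by_contra! h
  exact hred ⟨v, hv, h⟩

theorem ncard_indep_le_of_not_hasRedundantCliqueVertex [Finite V] (hdisj : Disjoint K I)
    (hind : SecureOnIndep G K I S) (hred : ¬ HasRedundantCliqueVertex G K I S) :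
    I.ncard ≤ S.ncard := by
  choose! f hfS hadj hdom using hind
  -- `x` is recovered from its defender `f x` as the private neighbour of `f x` in `I \ S`.
  have eq_of_private {x y : V} (hx : x ∈ I \ S) (hy : y ∈ I \ S)
      (hpriv : ∀ t ∈ (S ∩ K) \ {f x}, ¬ G.Adj y t) : y = x := by
    by_contra hyx
    obtain ⟨t, ht, hyt⟩ := hdom x hx y ⟨hy, hyx⟩
    exact hpriv t ht hyt
  have hinj : InjOn f (I \ S) := by
    intro x hx x' hx' hff
    obtain ⟨y, hy, hpriv⟩ :=
      exists_forall_not_adj_of_not_hasRedundantCliqueVertex hred (hfS x hx)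
    exact (eq_of_private hx hy hpriv).symm.trans (eq_of_private hx' hy (hff ▸ hpriv))
  have h₁ : (I \ S).ncard ≤ (S ∩ K).ncard := ncard_le_ncard_of_injOn f hfS hinj
  have h₂ : (S ∩ K).ncard ≤ (S \ I).ncard :=
    ncard_le_ncard fun v hv => ⟨hv.1, disjoint_left.1 hdisj hv.2⟩
  have h₃ := ncard_inter_add_ncard_sdiff_eq_ncard I S
  have h₄ := ncard_inter_add_ncard_sdiff_eq_ncard S I
  rw [inter_comm] at h₄
  omega

theorem exists_adj_indep_of_not_hasRedundantCliqueVertex (hpart : K ∪ I = univ)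
    (hdisj : Disjoint K I) (hI : ∀ a ∈ I, ∀ b ∈ I, ¬ G.Adj a b) (hS : SecureDominates G S)
    (hred : ¬ HasRedundantCliqueVertex G K I S) {b : V} (hb : b ∈ K) :
    ∃ y ∈ I, G.Adj b y := by
  by_cases hbS : b ∈ S
  · obtain ⟨y, hy, hpriv⟩ :=
      exists_forall_not_adj_of_not_hasRedundantCliqueVertex hred ⟨hbS, hb⟩
    obtain ⟨t, htSK, hyt⟩ := (hS.secureOnIndep hpart hI).dominatesOn y hy
    obtain rfl : t = b := by_contra fun h => hpriv t ⟨htSK, h⟩ hyt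
    exact ⟨y, hy.1, hyt.symm⟩
  obtain ⟨v, hvS, hbv, hdom⟩ := hS.2 b hbS
  rcases eq_univ_iff_forall.1 hpart v with hvK | hvI
  · obtain ⟨y, ⟨hyI, hyS⟩, hpriv⟩ :=
      exists_forall_not_adj_of_not_hasRedundantCliqueVertex hred ⟨hvS, hvK⟩
    have hyb : y ≠ b := fun h => disjoint_left.1 hdisj hb (h ▸ hyI)
    obtain ⟨t, ⟨htS, htv⟩ | rfl, hyt⟩ := hdom y (by simp [hyS, hyb])
    · exact absurd hyt (hpriv t ⟨⟨htS, mem_of_adj_of_mem_indep hpart hI hyI hyt⟩, htv⟩)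
    · exact ⟨y, hyI, hyt.symm⟩
  · exact ⟨v, hvI, hbv⟩

theorem exists_secureOnIndep_secureOnClique [Finite V] (hpart : K ∪ I = univ)
    (hdisj : Disjoint K I) (hI : ∀ a ∈ I, ∀ b ∈ I, ¬ G.Adj a b) (hS : SecureDominates G S) :
    ∃ D, SecureOnIndep G K I D ∧ SecureOnClique G K I D ∧ D.ncard ≤ S.ncard := by
  have hind := hS.secureOnIndep hpart hI
  by_cases hcl : SecureOnClique G K I S
  · exact ⟨S, hind, hcl, le_rfl⟩
  have hred : ¬ HasRedundantCliqueVertex G K I S := fun h => hcl (Or.inr h)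
  refine ⟨I, fun x hx => absurd hx.1 hx.2, Or.inl fun b hb => ?_,
    ncard_indep_le_of_not_hasRedundantCliqueVertex hdisj hind hred⟩
  obtain ⟨y, hy, hby⟩ :=
    exists_adj_indep_of_not_hasRedundantCliqueVertex hpart hdisj hI hS hred hb.1
  exact ⟨y, ⟨hy, hy⟩, hby⟩

end SplitGraph

namespace splitBigExt

abbrev copy (u : V) : V ⊕ V ⊕ Fin 4 := Sum.inr (Sum.inl u)
abbrev k : V ⊕ V ⊕ Fin 4 := Sum.inr (Sum.inr 0)
abbrev l : V ⊕ V ⊕ Fin 4 := Sum.inr (Sum.inr 1)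
abbrev m : V ⊕ V ⊕ Fin 4 := Sum.inr (Sum.inr 2)
abbrev n : V ⊕ V ⊕ Fin 4 := Sum.inr (Sum.inr 3)

variable {G : SimpleGraph V} {K I : Set V} {u v : V} {i j : Fin 4}

@[simp] theorem adj_inl_inl : (splitBigExt G K I).Adj (Sum.inl u) (Sum.inl v) ↔
    G.Adj u v ∧ (u ∈ K ∧ v ∈ I ∨ u ∈ I ∧ v ∈ K) := by
  simp only [splitBigExt, SimpleGraph.fromRel_adj]
  aesop (add safe SimpleGraph.Adj.symm)

@[simp] theorem adj_copy_copy : (splitBigExt G K I).Adj (copy u) (copy v) ↔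
    G.Adj u v ∧ (u ∈ K ∧ v ∈ I ∨ u ∈ I ∧ v ∈ K) := by
  simp only [splitBigExt, SimpleGraph.fromRel_adj]
  aesop (add safe SimpleGraph.Adj.symm)

@[simp] theorem adj_inl_copy : (splitBigExt G K I).Adj (Sum.inl u) (copy v) ↔ u ∈ K ∧ v ∈ K := by
  simp [splitBigExt]

@[simp] theorem adj_copy_inl : (splitBigExt G K I).Adj (copy u) (Sum.inl v) ↔ u ∈ K ∧ v ∈ K := by
  rw [SimpleGraph.adj_comm, adj_inl_copy, and_comm]

@[simp] theorem adj_inl_apex :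
    (splitBigExt G K I).Adj (Sum.inl u) (Sum.inr (Sum.inr i)) ↔ i = 2 ∧ u ∈ K := by
  simp [splitBigExt, and_comm]

@[simp] theorem adj_apex_inl :
    (splitBigExt G K I).Adj (Sum.inr (Sum.inr i)) (Sum.inl u) ↔ i = 2 ∧ u ∈ K := by
  rw [SimpleGraph.adj_comm, adj_inl_apex]

@[simp] theorem adj_copy_apex :
    (splitBigExt G K I).Adj (copy u) (Sum.inr (Sum.inr i)) ↔ i = 0 ∧ u ∈ K := by
  simp [splitBigExt]

@[simp] theorem adj_apex_copy :
    (splitBigExt G K I).Adj (Sum.inr (Sum.inr i)) (copy u) ↔ i = 0 ∧ u ∈ K := by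
  rw [SimpleGraph.adj_comm, adj_copy_apex]

@[simp] theorem adj_apex_apex :
    (splitBigExt G K I).Adj (Sum.inr (Sum.inr i)) (Sum.inr (Sum.inr j)) ↔
      s(i, j) = s(0, 2) ∨ s(i, j) = s(0, 1) ∨ s(i, j) = s(2, 3) := by
  fin_cases i <;> fin_cases j <;> simp [splitBigExt]

theorem adj_l_iff {z : V ⊕ V ⊕ Fin 4} : (splitBigExt G K I).Adj l z ↔ z = k := by
  rcases z with _ | _ | j
  · simp
  · simp
  · fin_cases j <;> simp

theorem adj_n_iff {z : V ⊕ V ⊕ Fin 4} : (splitBigExt G K I).Adj n z ↔ z = m := by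
  rcases z with _ | _ | j
  · simp
  · simp
  · fin_cases j <;> simp

theorem adj_inl_of_mem_indep (hdisj : Disjoint K I) {x : V} (hx : x ∈ I) {z : V ⊕ V ⊕ Fin 4}
    (h : (splitBigExt G K I).Adj (Sum.inl x) z) : ∃ s ∈ K, z = Sum.inl s ∧ G.Adj x s := by
  have hxK : x ∉ K := fun h => disjoint_left.1 hdisj h hx
  rcases z with s | s | i
  · simp only [adj_inl_inl, hxK, false_and, false_or] at h
    exact ⟨s, h.2.2, rfl, h.1⟩
  · simp [hxK] at h
  · simp [hxK] at h

def swapFun : V ⊕ V ⊕ Fin 4 → V ⊕ V ⊕ Fin 4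
  | Sum.inl u => copy u
  | Sum.inr (Sum.inl u) => Sum.inl u
  | Sum.inr (Sum.inr i) => Sum.inr (Sum.inr (i + 2))

theorem swapFun_involutive : Function.Involutive (swapFun (V := V)) := by
  rintro (u | u | i)
  · rfl
  · rfl
  · fin_cases i <;> rfl

variable (G K I) in
def swap : splitBigExt G K I ≃g splitBigExt G K I where
  toEquiv := swapFun_involutive.toPerm
  map_rel_iff' {a b} := by
    rcases a with u | u | p <;> rcases b with v | v | q
    all_goals (try fin_cases p) <;> (try fin_cases q) <;> simp [swapFun]

@[simp] theorem swap_inl : swap G K I (Sum.inl u) = copy u := rfl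

@[simp] theorem swap_copy : swap G K I (copy u) = Sum.inl u := rfl

@[simp] theorem swap_apex : swap G K I (Sum.inr (Sum.inr i)) = Sum.inr (Sum.inr (i + 2)) := rfl

theorem image_swap (T : Set (V ⊕ V ⊕ Fin 4)) : swap G K I '' T = swap G K I ⁻¹' T :=
  congrFun swapFun_involutive.image_eq_preimage_symm T

theorem preimage_inl_image_swap (T : Set (V ⊕ V ⊕ Fin 4)) :
    Sum.inl ⁻¹' (swap G K I '' T) = copy ⁻¹' T := by
  rw [image_swap]; rfl

theorem preimage_copy_image_swap (T : Set (V ⊕ V ⊕ Fin 4)) :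
    copy ⁻¹' (swap G K I '' T) = Sum.inl ⁻¹' T := by
  rw [image_swap]; rfl

variable {T : Set (V ⊕ V ⊕ Fin 4)}

theorem ncard_eq_add [Finite V] (T : Set (V ⊕ V ⊕ Fin 4)) : T.ncard =
    (Sum.inl ⁻¹' T).ncard + (copy ⁻¹' T).ncard + {i : Fin 4 | Sum.inr (Sum.inr i) ∈ T}.ncard := by
  rw [← ncard_preimage_inl_add_ncard_preimage_inr T,
    ← ncard_preimage_inl_add_ncard_preimage_inr (Sum.inr ⁻¹' T), add_assoc]
  rfl

theorem dominatesOn_preimage_inl (hdisj : Disjoint K I) (h : Dominates (splitBigExt G K I) T) :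
    DominatesOn G (Sum.inl ⁻¹' T ∩ K) (I \ Sum.inl ⁻¹' T) := by
  rintro x ⟨hxI, hxT⟩
  obtain ⟨z, hz, hxz⟩ := h _ hxT
  obtain ⟨s, hsK, rfl, hxs⟩ := adj_inl_of_mem_indep hdisj hxI hxz
  exact ⟨s, ⟨hz, hsK⟩, hxs⟩

theorem dominatesOn_preimage_copy (hdisj : Disjoint K I) (h : Dominates (splitBigExt G K I) T) :
    DominatesOn G (copy ⁻¹' T ∩ K) (I \ copy ⁻¹' T) := by
  simpa only [preimage_inl_image_swap] using
    dominatesOn_preimage_inl hdisj (h.image (swap G K I))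

theorem dominates_of_dominatesOn (hpart : K ∪ I = univ) (hk : k ∈ T) (hm : m ∈ T)
    (hA : DominatesOn G (Sum.inl ⁻¹' T ∩ K) (I \ Sum.inl ⁻¹' T))
    (hB : DominatesOn G (copy ⁻¹' T ∩ K) (I \ copy ⁻¹' T)) :
    Dominates (splitBigExt G K I) T := by
  rintro (x | x | i) hx
  · rcases eq_univ_iff_forall.1 hpart x with hxK | hxI
    · exact ⟨m, hm, by simp [hxK]⟩
    · obtain ⟨s, ⟨hsT, hsK⟩, hxs⟩ := hA x ⟨hxI, hx⟩
      exact ⟨Sum.inl s, hsT, by simp [hxs, hxI, hsK]⟩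
  · rcases eq_univ_iff_forall.1 hpart x with hxK | hxI
    · exact ⟨k, hk, by simp [hxK]⟩
    · obtain ⟨s, ⟨hsT, hsK⟩, hxs⟩ := hB x ⟨hxI, hx⟩
      exact ⟨copy s, hsT, by simp [hxs, hxI, hsK]⟩
  · fin_cases i
    · exact absurd hk hx
    · exact ⟨k, hk, by simp⟩
    · exact absurd hm hx
    · exact ⟨m, hm, by simp⟩

def doubled (D : Set V) : Set (V ⊕ V ⊕ Fin 4) := Sum.inl '' D ∪ copy '' D ∪ {k, m}

variable {D : Set V}

@[simp] theorem inl_mem_doubled : Sum.inl u ∈ doubled D ↔ u ∈ D := by simp [doubled]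

@[simp] theorem copy_mem_doubled : copy u ∈ doubled D ↔ u ∈ D := by simp [doubled]

@[simp] theorem apex_mem_doubled : Sum.inr (Sum.inr i) ∈ doubled D ↔ i = 0 ∨ i = 2 := by
  simp [doubled]

theorem image_swap_doubled : swap G K I '' doubled D = doubled D := by
  ext z
  rw [image_swap]
  rcases z with u | u | i
  · simp
  · simp
  · fin_cases i <;> simp

theorem ncard_doubled [Finite V] (D : Set V) : (doubled D).ncard = 2 * D.ncard + 2 := by
  have : {i : Fin 4 | Sum.inr (Sum.inr i) ∈ doubled D} = {0, 2} := by ext i; simp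
  rw [ncard_eq_add, this, ncard_pair (by decide)]
  simp only [preimage, inl_mem_doubled, copy_mem_doubled, ofPred_mem_eq]
  ring

theorem isDefended_inl_of_inl_mem (hpart : K ∪ I = univ)
    (hF1 : DominatesOn G (D ∩ K) (I \ D)) {x w : V} (hwD : w ∈ D)
    (hxw : (splitBigExt G K I).Adj (Sum.inl x) (Sum.inl w))
    (hA : DominatesOn G ((D \ {w} ∪ {x}) ∩ K) (I \ (D \ {w} ∪ {x}))) :
    IsDefended (splitBigExt G K I) (doubled D) (Sum.inl x) := by
  have hinl : Sum.inl ⁻¹' (doubled D \ {Sum.inl w} ∪ {Sum.inl x}) = D \ {w} ∪ {x} := by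
    ext; simp
  have hcopy : copy ⁻¹' (doubled D \ {Sum.inl w} ∪ {Sum.inl x}) = D := by ext; simp
  refine ⟨Sum.inl w, by simpa, hxw, dominates_of_dominatesOn hpart (by simp) (by simp) ?_ ?_⟩
  · rwa [hinl]
  · rwa [hcopy]

theorem isDefended_inl_of_copy_mem (hpart : K ∪ I = univ)
    (hF1 : DominatesOn G (D ∩ K) (I \ D)) {x v : V} (hvD : v ∈ D)
    (hxv : (splitBigExt G K I).Adj (Sum.inl x) (copy v))
    (hB : DominatesOn G ((D \ {v}) ∩ K) (I \ (D \ {v}))) :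
    IsDefended (splitBigExt G K I) (doubled D) (Sum.inl x) := by
  have hinl : Sum.inl ⁻¹' (doubled D \ {copy v} ∪ {Sum.inl x}) = D ∪ {x} := by ext; simp
  have hcopy : copy ⁻¹' (doubled D \ {copy v} ∪ {Sum.inl x}) = D \ {v} := by ext; simp
  refine ⟨copy v, by simpa, hxv, dominates_of_dominatesOn hpart (by simp) (by simp) ?_ ?_⟩
  · rw [hinl]
    exact hF1.mono (inter_subset_inter_left _ subset_union_left)
      (sdiff_subset_sdiff_right subset_union_left)
  · rwa [hcopy]

theorem isDefended_doubled_inl (hpart : K ∪ I = univ) (hdisj : Disjoint K I)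
    (hind : SecureOnIndep G K I D) (hcl : SecureOnClique G K I D) {x : V} (hx : x ∉ D) :
    IsDefended (splitBigExt G K I) (doubled D) (Sum.inl x) := by
  have hF1 := hind.dominatesOn
  rcases eq_univ_iff_forall.1 hpart x with hxK | hxI
  · rcases hcl with hcl | ⟨v, ⟨hvD, hvK⟩, hdom⟩
    · obtain ⟨w, ⟨hwD, hwI⟩, hxw⟩ := hcl x ⟨hxK, hx⟩
      refine isDefended_inl_of_inl_mem hpart hF1 hwD (by simp [hxw, hxK, hwI]) ?_
      rintro y ⟨hyI, hyT⟩
      simp only [mem_union, mem_sdiff, mem_singleton_iff, not_or, not_and, not_not] at hyT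
      by_cases hyw : y = w
      · exact ⟨x, ⟨Or.inr rfl, hxK⟩, hyw ▸ hxw.symm⟩
      obtain ⟨s, ⟨hsD, hsK⟩, hys⟩ := hF1 y ⟨hyI, fun h => hyw (hyT.1 h)⟩
      exact ⟨s, ⟨Or.inl ⟨hsD, fun h => disjoint_left.1 hdisj hsK (h ▸ hwI)⟩, hsK⟩, hys⟩
    · refine isDefended_inl_of_copy_mem hpart hF1 hvD (by simp [hxK, hvK]) ?_
      rintro y ⟨hyI, hyT⟩
      have hyD : y ∉ D := fun h => hyT ⟨h, fun h' => disjoint_left.1 hdisj hvK (h' ▸ hyI)⟩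
      obtain ⟨t, ⟨⟨htD, htK⟩, htv⟩, hyt⟩ := hdom y ⟨hyI, hyD⟩
      exact ⟨t, ⟨⟨htD, htv⟩, htK⟩, hyt⟩
  · obtain ⟨s, ⟨hsD, hsK⟩, hxs, hdom⟩ := hind x ⟨hxI, hx⟩
    refine isDefended_inl_of_inl_mem hpart hF1 hsD (by simp [hxs, hxI, hsK]) ?_
    rintro y ⟨hyI, hyT⟩
    simp only [mem_union, mem_sdiff, mem_singleton_iff, not_or, not_and, not_not] at hyT
    have hyD : y ∉ D := fun h => disjoint_left.1 hdisj hsK (hyT.1 h ▸ hyI)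
    obtain ⟨t, ⟨⟨htD, htK⟩, hts⟩, hyt⟩ := hdom y ⟨⟨hyI, hyD⟩, hyT.2⟩
    exact ⟨t, ⟨Or.inl ⟨htD, hts⟩, htK⟩, hyt⟩

theorem isDefended_doubled_l (hpart : K ∪ I = univ) (hind : SecureOnIndep G K I D)
    (hcl : SecureOnClique G K I D) : IsDefended (splitBigExt G K I) (doubled D) l := by
  have hF1 := hind.dominatesOn
  refine ⟨k, by simp, by simp, ?_⟩
  rintro (y | y | i) hy
  · have hyD : y ∉ D := fun h => hy (by simp [h])
    rcases eq_univ_iff_forall.1 hpart y with hyK | hyI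
    · exact ⟨m, by simp, by simp [hyK]⟩
    · obtain ⟨s, ⟨hsD, hsK⟩, hys⟩ := hF1 y ⟨hyI, hyD⟩
      exact ⟨Sum.inl s, by simp [hsD], by simp [hys, hyI, hsK]⟩
  · have hyD : y ∉ D := fun h => hy (by simp [h])
    rcases eq_univ_iff_forall.1 hpart y with hyK | hyI
    · rcases hcl with hcl | ⟨v, ⟨hvD, hvK⟩, -⟩
      · obtain ⟨w, ⟨hwD, hwI⟩, hyw⟩ := hcl y ⟨hyK, hyD⟩
        exact ⟨copy w, by simp [hwD], by simp [hyw, hyK, hwI]⟩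
      · exact ⟨Sum.inl v, by simp [hvD], by simp [hyK, hvK]⟩
    · obtain ⟨s, ⟨hsD, hsK⟩, hys⟩ := hF1 y ⟨hyI, hyD⟩
      exact ⟨copy s, by simp [hsD], by simp [hys, hyI, hsK]⟩
  · fin_cases i
    · exact ⟨l, by simp, by simp⟩
    · simp at hy
    · simp at hy
    · exact ⟨m, by simp, by simp⟩

theorem secureDominates_doubled (hpart : K ∪ I = univ) (hdisj : Disjoint K I)
    (hind : SecureOnIndep G K I D) (hcl : SecureOnClique G K I D) :
    SecureDominates (splitBigExt G K I) (doubled D) := by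
  have of_swap {z} (hz : IsDefended (splitBigExt G K I) (doubled D) z) :
      IsDefended (splitBigExt G K I) (doubled D) (swap G K I z) := by
    simpa only [image_swap_doubled] using hz.image (swap G K I)
  have hinl (x : V) (hx : x ∉ D) := isDefended_doubled_inl hpart hdisj hind hcl hx
  have hl := isDefended_doubled_l hpart hind hcl
  refine secureDominates_of_forall_isDefended ?_
  rintro (x | x | i) hx
  · exact hinl x (by simpa using hx)
  · exact of_swap (hinl x (by simpa using hx))
  · fin_cases i
    · simp at hx
    · exact hl
    · simp at hx
    · exact of_swap hl

theorem exists_secureDominates_of_secureDominates [Finite V] (hpart : K ∪ I = univ)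
    (hdisj : Disjoint K I) (hI : ∀ a ∈ I, ∀ b ∈ I, ¬ G.Adj a b) {S : Set V}
    (hS : SecureDominates G S) :
    ∃ T, SecureDominates (splitBigExt G K I) T ∧ T.ncard ≤ 2 * S.ncard + 2 := by
  obtain ⟨D, hind, hcl, hD⟩ := exists_secureOnIndep_secureOnClique hpart hdisj hI hS
  exact ⟨doubled D, secureDominates_doubled hpart hdisj hind hcl, by rw [ncard_doubled]; omega⟩

theorem secureOnIndep_preimage_inl (hdisj : Disjoint K I)
    (hS : SecureDominates (splitBigExt G K I) T) : SecureOnIndep G K I (Sum.inl ⁻¹' T) := by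
  rintro x ⟨hxI, hxT⟩
  obtain ⟨z, hz, hxz, hdom⟩ := hS.2 _ hxT
  obtain ⟨s, hsK, rfl, hxs⟩ := adj_inl_of_mem_indep hdisj hxI hxz
  have hpre : Sum.inl ⁻¹' (T \ {Sum.inl s} ∪ {Sum.inl x}) = Sum.inl ⁻¹' T \ {s} ∪ {x} := by
    ext; simp
  refine ⟨s, ⟨hz, hsK⟩, hxs, (dominatesOn_preimage_inl hdisj hdom).mono ?_ ?_⟩
  · rw [hpre]
    rintro t ⟨⟨htT, hts⟩ | rfl, htK⟩
    · exact ⟨⟨htT, htK⟩, hts⟩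
    · exact absurd hxI (disjoint_left.1 hdisj htK)
  · rw [hpre]
    rintro t ⟨⟨htI, htT⟩, htx⟩
    exact ⟨htI, fun h => h.elim (fun h => htT h.1) htx⟩

theorem hasRedundantCliqueVertex_preimage_copy_or (hdisj : Disjoint K I)
    (hS : SecureDominates (splitBigExt G K I) T) {b : V} (hb : b ∈ K) (hbT : Sum.inl b ∉ T)
    (hbI : ∀ w ∈ Sum.inl ⁻¹' T ∩ I, ¬ G.Adj b w) :
    HasRedundantCliqueVertex G K I (copy ⁻¹' T) ∨ (m ∈ T ∧ n ∈ T) := by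
  have hbI' : b ∉ I := disjoint_left.1 hdisj hb
  obtain ⟨z, hz, hbz, hdom⟩ := hS.2 _ hbT
  rcases z with w | v | i
  · simp only [adj_inl_inl, hb, hbI', true_and, false_and, or_false] at hbz
    exact absurd hbz.1 (hbI w ⟨hz, hbz.2⟩)
  · have hvK : v ∈ K := by simpa [hb] using hbz
    have hpre : copy ⁻¹' (T \ {copy v} ∪ {Sum.inl b}) = copy ⁻¹' T \ {v} := by ext; simp
    refine Or.inl ⟨v, ⟨hz, hvK⟩, (dominatesOn_preimage_copy hdisj hdom).mono ?_ ?_⟩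
    · rw [hpre]
      exact fun t ⟨⟨htT, htv⟩, htK⟩ => ⟨⟨htT, htK⟩, htv⟩
    · rw [hpre]
      exact sdiff_subset_sdiff_right sdiff_subset
  · obtain rfl : i = 2 := by simpa [hb] using hbz
    refine Or.inr ⟨hz, by_contra fun hn => ?_⟩
    obtain ⟨z, hz', hnz⟩ := hdom n (by simp [hn])
    rw [adj_n_iff.1 hnz] at hz'
    simp at hz'

theorem secureDominates_preimage_inl_or [Finite V] (hpart : K ∪ I = univ)
    (hdisj : Disjoint K I) (hK : G.IsClique K) (hS : SecureDominates (splitBigExt G K I) T) :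
    SecureDominates G (Sum.inl ⁻¹' T) ∨
      (∃ S, SecureDominates G S ∧ S.ncard ≤ (Sum.inl ⁻¹' T).ncard + 1) ∧
        (SecureDominates G (copy ⁻¹' T) ∨ m ∈ T ∧ n ∈ T) := by
  have hind := secureOnIndep_preimage_inl hdisj hS
  by_cases hcl : SecureOnClique G K I (Sum.inl ⁻¹' T)
  · exact Or.inl (secureDominates_of_secureOnIndep hpart hdisj hK hind hcl)
  obtain ⟨b, hb, hbI⟩ : ∃ b ∈ K \ Sum.inl ⁻¹' T, ∀ w ∈ Sum.inl ⁻¹' T ∩ I, ¬ G.Adj b w := by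
    by_contra! h
    exact hcl (Or.inl h)
  have hI := ncard_indep_le_of_not_hasRedundantCliqueVertex hdisj hind fun h => hcl (Or.inr h)
  refine Or.inr ⟨⟨insert b I, secureDominates_insert_indep hpart hdisj hK hb.1,
    (ncard_insert_le b I).trans (by omega)⟩, ?_⟩
  refine (hasRedundantCliqueVertex_preimage_copy_or hdisj hS hb.1 hb.2 hbI).imp_left
    fun hred => secureDominates_of_secureOnIndep hpart hdisj hK ?_ (Or.inr hred)
  simpa only [preimage_inl_image_swap] using
    secureOnIndep_preimage_inl hdisj (hS.image (swap G K I))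

theorem k_mem_or_l_mem (h : Dominates (splitBigExt G K I) T) : k ∈ T ∨ l ∈ T :=
  or_iff_not_imp_right.2 fun hl =>
    let ⟨_, hz, hlz⟩ := h l hl
    adj_l_iff.1 hlz ▸ hz

theorem m_mem_or_n_mem (h : Dominates (splitBigExt G K I) T) : m ∈ T ∨ n ∈ T :=
  or_iff_not_imp_right.2 fun hn =>
    let ⟨_, hz, hnz⟩ := h n hn
    adj_n_iff.1 hnz ▸ hz

theorem two_le_ncard_apex (h : Dominates (splitBigExt G K I) T) :
    2 ≤ {i : Fin 4 | Sum.inr (Sum.inr i) ∈ T}.ncard := by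
  rw [Nat.succ_le_iff, one_lt_ncard_iff]
  rcases k_mem_or_l_mem h with h₁ | h₁ <;> rcases m_mem_or_n_mem h with h₂ | h₂ <;>
    exact ⟨_, _, h₁, h₂, by decide⟩

theorem three_le_ncard_apex (h : Dominates (splitBigExt G K I) T) (hm : m ∈ T) (hn : n ∈ T) :
    3 ≤ {i : Fin 4 | Sum.inr (Sum.inr i) ∈ T}.ncard := by
  rw [Nat.succ_le_iff, two_lt_ncard_iff]
  rcases k_mem_or_l_mem h with h₁ | h₁ <;>
    exact ⟨_, _, _, h₁, hm, hn, by decide, by decide, by decide⟩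

theorem exists_secureDominates_of_splitBigExt [Finite V] (hpart : K ∪ I = univ)
    (hdisj : Disjoint K I) (hK : G.IsClique K) (hS : SecureDominates (splitBigExt G K I) T) :
    ∃ S, SecureDominates G S ∧ 2 * S.ncard + 1 ≤ T.ncard := by
  wlog hle : (Sum.inl ⁻¹' T).ncard ≤ (copy ⁻¹' T).ncard generalizing T
  · obtain ⟨S, hS', hcard⟩ := this (hS.image (swap G K I))
      (by rw [preimage_inl_image_swap, preimage_copy_image_swap]; omega)
    exact ⟨S, hS', hcard.trans (ncard_image_of_injective _ (swap G K I).injective).le⟩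
  have hT := ncard_eq_add T
  have h₂ := two_le_ncard_apex hS.1
  rcases secureDominates_preimage_inl_or hpart hdisj hK hS with
    hA | ⟨⟨S, hS', hcard⟩, hB | ⟨hm, hn⟩⟩
  · exact ⟨_, hA, by omega⟩
  · by_cases hc : (copy ⁻¹' T).ncard ≤ (Sum.inl ⁻¹' T).ncard
    · exact ⟨_, hB, by omega⟩
    · exact ⟨S, hS', by omega⟩
  · have h₃ := three_le_ncard_apex hS.1 hm hn
    exact ⟨S, hS', by omega⟩

end splitBigExt

end

theorem splitBigExt_secureDomination_iff_general {V : Type*} [Fintype V]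
    (G : SimpleGraph V) (K I : Set V)
    (hpart : K ∪ I = Set.univ) (hdisj : Disjoint K I)
    (hK : G.IsClique K) (hI : ∀ a ∈ I, ∀ b ∈ I, ¬ G.Adj a b)
    (k₀ : ℕ) :
    (∃ S : Set V, SecureDominates G S ∧ S.ncard ≤ k₀) ↔
      (∃ S' : Set (V ⊕ V ⊕ Fin 4),
        SecureDominates (splitBigExt G K I) S' ∧ S'.ncard ≤ 2 * k₀ + 2) := by
  constructor
  · rintro ⟨S, hS, hcard⟩
    obtain ⟨S', hS', hcard'⟩ :=
      splitBigExt.exists_secureDominates_of_secureDominates hpart hdisj hI hS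
    exact ⟨S', hS', by omega⟩
  · rintro ⟨S', hS', hcard'⟩
    obtain ⟨S, hS, hcard⟩ := splitBigExt.exists_secureDominates_of_splitBigExt hpart hdisj hK hS'
    exact ⟨S, hS, by omega⟩

theorem splitBigExt_secureDomination_iff {V : Type*} [Fintype V]
    (G : SimpleGraph V) (K I : Set V)
    (hpart : K ∪ I = Set.univ) (hdisj : Disjoint K I)
    (hK : G.IsClique K) (hI : ∀ a ∈ I, ∀ b ∈ I, ¬ G.Adj a b)
    (k₀ : ℕ) (hk₀ : 0 < k₀) :
    (∃ S : Set V, SecureDominates G S ∧ S.ncard ≤ k₀) ↔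
      (∃ S' : Set (V ⊕ V ⊕ Fin 4),
        SecureDominates (splitBigExt G K I) S' ∧ S'.ncard ≤ 2 * k₀ + 2) :=
  splitBigExt_secureDomination_iff_general G K I hpart hdisj hK hI k₀
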